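/- arXiv:2512.21925 — 3 statements merged into one kernel-verified Lean document; each statement's English description precedes it below -/
import Mathlib

section
/- The optimal value τ* of the linear program (LP) satisfies Σ_{i=1}^m max(τ* − N_i, 0) = Q; that is, the budget constraint is exactly binding at the optimum. -/
open Finset

/-- The optimal value `τstar` of the linear program (LP) satisfies
`∑ i, max (τstar - N i) 0 = Q`: the budget constraint is exactly binding at the optimum. -/
theorem lp_optimal_value_budget_binding
    (m : ℕ) (hm : 1 ≤ m) (N : Fin m → ℝ) (hN : ∀ i, 0 ≤ N i)
    (Q : ℝ) (hQ : 0 ≤ Q)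
    (τstar : ℝ)
    (hopt : IsGreatest {τ : ℝ | ∃ n : Fin m → ℝ, 0 ≤ τ ∧ (∀ i, 0 ≤ n i) ∧
      (∀ i, τ ≤ N i + n i) ∧ ∑ i, n i ≤ Q} τstar) :
    ∑ i, max (τstar - N i) 0 = Q := by
  obtain ⟨⟨n, hτ0, hn0, hτN, hsum⟩, hub⟩ := hopt
  have hle : ∑ i, max (τstar - N i) 0 ≤ Q := by
    calc ∑ i, max (τstar - N i) 0 ≤ ∑ i, n i := by
          apply Finset.sum_le_sum
          intro i _
          exact max_le (by linarith [hτN i]) (hn0 i)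
      _ ≤ Q := hsum
  by_contra hne
  have hlt : ∑ i, max (τstar - N i) 0 < Q := lt_of_le_of_ne hle hne
  have hm0 : (0:ℝ) < m := by exact_mod_cast hm
  set S := ∑ i, max (τstar - N i) 0 with hS
  set ε := (Q - S) / m with hε
  have hε0 : 0 < ε := div_pos (by linarith) hm0
  have hmε : (m:ℝ) * ε = Q - S := by
    rw [hε]; field_simp
  have hmem : τstar + ε ∈ {τ : ℝ | ∃ n : Fin m → ℝ, 0 ≤ τ ∧ (∀ i, 0 ≤ n i) ∧
      (∀ i, τ ≤ N i + n i) ∧ ∑ i, n i ≤ Q} := by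
    refine ⟨fun i => max (τstar + ε - N i) 0, by linarith, fun i => le_max_right _ _,
      fun i => ?_, ?_⟩
    · have := le_max_left (τstar + ε - N i) 0
      linarith
    · calc ∑ i, max (τstar + ε - N i) 0
          ≤ ∑ i, (max (τstar - N i) 0 + ε) := by
            apply Finset.sum_le_sum
            intro i _
            apply max_le
            · linarith [le_max_left (τstar - N i) 0]
            · linarith [le_max_right (τstar - N i) 0]
        _ = S + m * ε := by
            rw [Finset.sum_add_distrib, Finset.sum_const, Finset.card_fin]
            push_cast; ring
        _ = Q := by linarith
  have := hub hmem
  linarith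
end

section
/- Let C* = (C*(1), …, C*(m)) be an optimal solution of the integer program (IP), and let τ* be the optimal value of the linear program (LP) with the same data N_1, …, N_m (viewed as reals) and the same budget Q. Then for every i ∈ {1, …, m}, C*(i) ≤ max(⌈τ*⌉ − N_i, 0). -/
open Finset

/-!
Suppose `Cstar i` exceeds the bound, so `N i + Cstar i ≥ ⌈τstar⌉ + 1` and `Cstar i ≥ 1`. The
marginal gains `1/√(N j + n)` decrease in the level `N j + n`, so moving one unit from `i` to any `j`
cannot help an optimal allocation: every level `N j + Cstar j` is at least `N i + Cstar i - 1 ≥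
⌈τstar⌉`. Taking that spare unit back from `i` and spreading it evenly over all `m` coordinates then
gives a feasible point of the LP with value `⌈τstar⌉ + 1/m > τstar`.
-/

theorem one_div_sqrt_le_one_div_sqrt_iff {a b : ℝ} (ha : 0 < a) (hb : 0 < b) :
    1 / √a ≤ 1 / √b ↔ b ≤ a := by
  rw [one_div_le_one_div (Real.sqrt_pos.2 ha) (Real.sqrt_pos.2 hb), Real.sqrt_le_sqrt_iff ha.le]

section

variable {ι : Type*} [Fintype ι]

def ipObjective (g : ι → ℕ → ℝ) (C : ι → ℕ) : ℝ :=
  ∑ x, ∑ n ∈ Icc 1 (C x), g x n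

def lpFeasibleValues (N : ι → ℝ) (Q : ℝ) : Set ℝ :=
  {τ | ∃ nn : ι → ℝ, 0 ≤ τ ∧ (∀ i, 0 ≤ nn i) ∧ (∀ i, τ ≤ N i + nn i) ∧ ∑ i, nn i ≤ Q}

variable [DecidableEq ι]

theorem ipObjective_add_single (g : ι → ℕ → ℝ) (D : ι → ℕ) (i : ι) :
    ipObjective g (D + Pi.single i 1) = ipObjective g D + g i (D i + 1) := by
  have hterm : ∀ x, ∑ n ∈ Icc 1 (D x + (Pi.single i 1 : ι → ℕ) x), g x n =
      ∑ n ∈ Icc 1 (D x), g x n + if x = i then g i (D i + 1) else 0 := by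
    intro x
    by_cases hx : x = i
    · subst hx
      simp [sum_Icc_succ_top]
    · simp [hx]
  simp only [ipObjective, Pi.add_apply, hterm, sum_add_distrib, sum_ite_eq', mem_univ, if_true]

theorem marginal_le_of_isMaxOn_ipObjective {g : ι → ℕ → ℝ} {Q : ℕ} {C : ι → ℕ}
    (hopt : IsMaxOn (ipObjective g) {C | ∑ x, C x ≤ Q} C) (hfeas : ∑ x, C x ≤ Q)
    {i j : ι} (hi : C i ≠ 0) (hji : j ≠ i) :
    g j (C j + 1) ≤ g i (C i) := by
  obtain ⟨d, hd⟩ := Nat.exists_eq_succ_of_ne_zero hi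
  set D := Function.update C i d
  have hC : C = D + Pi.single i 1 := by
    funext x
    by_cases hx : x = i
    · subst hx; simp [D, hd]
    · simp [D, hx]
  have hDj : D j = C j := Function.update_of_ne hji d C
  have hmoved : ∑ x, (D + Pi.single j 1 : ι → ℕ) x ≤ Q := by
    simpa [hC, sum_add_distrib] using hfeas
  have hle := isMaxOn_iff.1 hopt _ hmoved
  have hDi : D i + 1 = C i := by simp [D, hd]
  rw [hC, ipObjective_add_single, ipObjective_add_single, hDj, hDi] at hle
  linarith

theorem level_le_of_isMaxOn_ipObjective {N : ι → ℕ} {Q : ℕ} {C : ι → ℕ}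
    (hopt : IsMaxOn (ipObjective fun x n => 1 / √((N x : ℝ) + n)) {C : ι → ℕ | ∑ x, C x ≤ Q} C)
    (hfeas : ∑ x, C x ≤ Q) {i : ι} (hi : C i ≠ 0) (j : ι) :
    N i + C i ≤ N j + C j + 1 := by
  obtain rfl | hji := eq_or_ne j i
  · omega
  have hle := marginal_le_of_isMaxOn_ipObjective hopt hfeas hi hji
  rw [one_div_sqrt_le_one_div_sqrt_iff (by positivity) (by positivity)] at hle
  push_cast at hle
  exact_mod_cast hle.trans_eq (add_assoc _ _ _).symm

theorem add_inv_card_mem_lpFeasibleValues {N c : ι → ℝ} {Q t : ℝ} (hc : ∀ x, 0 ≤ c x) (hcQ : ∑ x, c x ≤ Q) (ht : 0 ≤ t)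
    (htc : ∀ x, t ≤ N x + c x) {i : ι} (hci : 1 ≤ c i) (hti : t + 1 ≤ N i + c i) :
    t + 1 / Fintype.card ι ∈ lpFeasibleValues N Q := by
  have hcard : (Fintype.card ι : ℝ) ≠ 0 := by
    have : Nonempty ι := ⟨i⟩
    exact_mod_cast Fintype.card_ne_zero
  set δ : ℝ := 1 / Fintype.card ι
  have hδ : 0 < δ := by positivity
  refine ⟨fun x => c x - (Pi.single i 1 : ι → ℝ) x + δ, by positivity, fun x => ?_, fun x => ?_, ?_⟩
  · by_cases hx : x = i
    · subst hx; simp only [Pi.single_eq_same]; linarith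
    · simp only [Pi.single_eq_of_ne hx, sub_zero]; linarith [hc x]
  · by_cases hx : x = i
    · subst hx; simp only [Pi.single_eq_same]; linarith
    · simp only [Pi.single_eq_of_ne hx, sub_zero]; linarith [htc x]
  · have hcardδ : (Fintype.card ι : ℝ) * δ = 1 := mul_one_div_cancel hcard
    simp only [sum_add_distrib, sum_sub_distrib, sum_pi_single', mem_univ, if_true, sum_const,
      card_univ, nsmul_eq_mul, hcardδ, sub_add_cancel]
    linarith

end

theorem ip_optimal_le_ceil_lp_value_general
    (m : ℕ) (N : Fin m → ℕ) (Q : ℕ)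
    (Cstar : Fin m → ℕ)
    (hCfeas : ∑ i, Cstar i ≤ Q)
    (hCopt : ∀ C : Fin m → ℕ, (∑ i, C i ≤ Q) →
      ∑ i, ∑ n ∈ Finset.Icc 1 (C i), (1 : ℝ) / Real.sqrt ((N i : ℝ) + (n : ℝ)) ≤
        ∑ i, ∑ n ∈ Finset.Icc 1 (Cstar i), (1 : ℝ) / Real.sqrt ((N i : ℝ) + (n : ℝ)))
    (τstar : ℝ)
    (hopt : IsGreatest {τ : ℝ | ∃ nn : Fin m → ℝ, 0 ≤ τ ∧ (∀ i, 0 ≤ nn i) ∧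
      (∀ i, τ ≤ (N i : ℝ) + nn i) ∧ ∑ i, nn i ≤ (Q : ℝ)} τstar) :
    ∀ i, (Cstar i : ℝ) ≤ max ((⌈τstar⌉ : ℝ) - (N i : ℝ)) 0 := by
  obtain ⟨-, hτ0, -⟩ := hopt.1
  intro i
  set k := ⌈τstar⌉
  by_contra! hlt
  obtain ⟨hk_lt, hCi_pos⟩ := max_lt_iff.1 hlt
  have hCi0 : Cstar i ≠ 0 := by exact_mod_cast hCi_pos.ne'
  have hlevel := level_le_of_isMaxOn_ipObjective (isMaxOn_iff.2 hCopt) hCfeas hCi0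
  have hki : (k : ℝ) + 1 ≤ N i + Cstar i := by
    have : k < ((N i + Cstar i : ℕ) : ℤ) := by
      exact_mod_cast (by linarith : (k : ℝ) < N i + Cstar i)
    exact_mod_cast this
  have hkj : ∀ j, (k : ℝ) ≤ N j + Cstar j := fun j => by
    have : (N i : ℝ) + Cstar i ≤ N j + Cstar j + 1 := by exact_mod_cast hlevel j
    linarith
  have hmem := add_inv_card_mem_lpFeasibleValues (N := fun j => (N j : ℝ)) (Q := Q)
    (c := fun j => (Cstar j : ℝ)) (fun j => by positivity) (by exact_mod_cast hCfeas)
    (by exact_mod_cast Int.ceil_nonneg hτ0) hkj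
    (by exact_mod_cast hCi_pos) hki
  have hδ : (0 : ℝ) < 1 / Fintype.card (Fin m) :=
    one_div_pos.2 (by exact_mod_cast Fintype.card_pos_iff.2 ⟨i⟩)
  linarith [hopt.2 hmem, Int.le_ceil τstar]

/-- Let `Cstar` be an optimal solution of the integer program (IP):
maximize `∑ i, ∑ n in Icc 1 (C i), 1/√(N i + n)` subject to `∑ i, C i ≤ Q`, and let
`τstar` be the optimal value of the linear program (LP) with the same data (viewed as reals).
Then for every `i`, `Cstar i ≤ max (⌈τstar⌉ - N i) 0`. -/
theorem ip_optimal_le_ceil_lp_value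
    (m : ℕ) (hm : 1 ≤ m) (N : Fin m → ℕ) (Q : ℕ)
    (Cstar : Fin m → ℕ)
    (hCfeas : ∑ i, Cstar i ≤ Q)
    (hCopt : ∀ C : Fin m → ℕ, (∑ i, C i ≤ Q) →
      ∑ i, ∑ n ∈ Finset.Icc 1 (C i), (1 : ℝ) / Real.sqrt ((N i : ℝ) + (n : ℝ)) ≤
        ∑ i, ∑ n ∈ Finset.Icc 1 (Cstar i), (1 : ℝ) / Real.sqrt ((N i : ℝ) + (n : ℝ)))
    (τstar : ℝ)
    (hopt : IsGreatest {τ : ℝ | ∃ nn : Fin m → ℝ, 0 ≤ τ ∧ (∀ i, 0 ≤ nn i) ∧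
      (∀ i, τ ≤ (N i : ℝ) + nn i) ∧ ∑ i, nn i ≤ (Q : ℝ)} τstar) :
    ∀ i, (Cstar i : ℝ) ≤ max ((⌈τstar⌉ : ℝ) - (N i : ℝ)) 0 :=
  ip_optimal_le_ceil_lp_value_general m N Q Cstar hCfeas hCopt τstar hopt
end

section
/- Assume m ≤ Q and τ* > 0, where τ* is the optimal value of the linear program (LP) with data N_1, …, N_m and budget Q. Then every feasible solution C of the integer program (IP) satisfies Σ_{i=1}^m Σ_{n=1}^{C(i)} 1/√(N_i + n) ≤ 8Q/√τ*. -/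
open Finset

/-
The sum `∑_{k=1}^{C} 1/√(x + k)` telescopes against `2√(x + C) - 2√x`. Writing `a = √x`,
`b = √(x + C)` and `s = √τ`, the elementary inequality `(b - a) s ≤ (b² - a²) + n` for any
`n ≥ max(0, s² - a²)` turns this into `2 (C + n) / √τ` whenever `τ ≤ x + n`. Applying it to each
index with the `n i` of a feasible LP point at level `τ*` and summing, both `∑ C i` and `∑ n i`
are at most `Q`, so the IP value is at most `4 Q / √τ*`.
-/

lemma one_div_sqrt_add_one_le {y : ℝ} (hy : 0 ≤ y) :
    1 / √(y + 1) ≤ 2 * (√(y + 1) - √y) := by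
  have hs : 0 < √(y + 1) := Real.sqrt_pos.mpr (by linarith)
  have hs2 : √(y + 1) ^ 2 = y + 1 := Real.sq_sqrt (by linarith)
  have ht2 : √y ^ 2 = y := Real.sq_sqrt hy
  rw [div_le_iff₀ hs]
  nlinarith [sq_nonneg (√(y + 1) - √y)]

lemma sum_Icc_one_div_sqrt_add_le {x : ℝ} (hx : 0 ≤ x) (C : ℕ) :
    ∑ k ∈ Icc 1 C, 1 / √(x + k) ≤ 2 * (√(x + C) - √x) := by
  induction C with
  | zero => simp
  | succ C ih =>
    rw [sum_Icc_succ_top (by omega), Nat.cast_succ, ← add_assoc]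
    have := one_div_sqrt_add_one_le (by positivity : 0 ≤ x + C)
    linarith

lemma sub_mul_le_sq_sub_sq_add {a b s n : ℝ} (ha : 0 ≤ a) (hab : a ≤ b) (hn : 0 ≤ n)
    (hsn : s ^ 2 - a ^ 2 ≤ n) :
    (b - a) * s ≤ b ^ 2 - a ^ 2 + n := by
  rcases le_total s a with hsa | has
  · nlinarith [mul_le_mul_of_nonneg_left hsa (sub_nonneg.mpr hab)]
  · nlinarith [sq_nonneg (b - s), mul_nonneg (sub_nonneg.mpr hab) (sub_nonneg.mpr has)]

lemma sum_Icc_one_div_sqrt_add_le_of_le_add {x n τ : ℝ} (hx : 0 ≤ x) (hn : 0 ≤ n) (hτ : 0 < τ)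
    (hτxn : τ ≤ x + n) (C : ℕ) :
    ∑ k ∈ Icc 1 C, 1 / √(x + k) ≤ 2 * (C + n) / √τ := by
  have hsτ : 0 < √τ := Real.sqrt_pos.mpr hτ
  have key := sub_mul_le_sq_sub_sq_add (Real.sqrt_nonneg x)
    (Real.sqrt_le_sqrt (by simp : x ≤ x + C)) hn
    (by rw [Real.sq_sqrt hτ.le, Real.sq_sqrt hx]; linarith)
  rw [Real.sq_sqrt (by positivity), Real.sq_sqrt hx] at key
  calc ∑ k ∈ Icc 1 C, 1 / √(x + k) ≤ 2 * (√(x + C) - √x) := sum_Icc_one_div_sqrt_add_le hx C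
    _ ≤ 2 * (C + n) / √τ := by
      rw [le_div_iff₀ hsτ]
      linarith

theorem ip_value_le_eight_budget_div_sqrt_lp_general
    (m : ℕ) (N : Fin m → ℕ) (Q : ℕ)
    (τstar : ℝ) (hτpos : 0 < τstar)
    (hopt : IsGreatest {τ : ℝ | ∃ nn : Fin m → ℝ, 0 ≤ τ ∧ (∀ i, 0 ≤ nn i) ∧
      (∀ i, τ ≤ (N i : ℝ) + nn i) ∧ ∑ i, nn i ≤ (Q : ℝ)} τstar)
    (C : Fin m → ℕ) (hC : ∑ i, C i ≤ Q) :
    ∑ i, ∑ n ∈ Finset.Icc 1 (C i), (1 : ℝ) / Real.sqrt ((N i : ℝ) + (n : ℝ)) ≤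
      8 * (Q : ℝ) / Real.sqrt τstar := by
  obtain ⟨nn, -, hnn, hτnn, hnnQ⟩ := hopt.1
  have hCQ : ∑ i, (C i : ℝ) ≤ Q := by exact_mod_cast hC
  calc ∑ i, ∑ n ∈ Icc 1 (C i), (1 : ℝ) / √((N i : ℝ) + n)
      ≤ ∑ i, 2 * (C i + nn i) / √τstar := sum_le_sum fun i _ =>
        sum_Icc_one_div_sqrt_add_le_of_le_add (Nat.cast_nonneg _) (hnn i) hτpos (hτnn i) (C i)
    _ = 2 * (∑ i, (C i : ℝ) + ∑ i, nn i) / √τstar := by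
      rw [← sum_div, ← mul_sum, sum_add_distrib]
    _ ≤ 8 * Q / √τstar := by
      apply div_le_div_of_nonneg_right _ (Real.sqrt_nonneg _)
      linarith

/-- Assume `m ≤ Q` and `τstar > 0`, where `τstar` is the optimal value of the
linear program (LP). Then every feasible solution `C` of the integer program (IP) satisfies
`∑ i, ∑ n in Icc 1 (C i), 1/√(N i + n) ≤ 8 * Q / √τstar`. -/
theorem ip_value_le_eight_budget_div_sqrt_lp
    (m : ℕ) (hm : 1 ≤ m) (N : Fin m → ℕ) (Q : ℕ) (hmQ : m ≤ Q)
    (τstar : ℝ) (hτpos : 0 < τstar)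
    (hopt : IsGreatest {τ : ℝ | ∃ nn : Fin m → ℝ, 0 ≤ τ ∧ (∀ i, 0 ≤ nn i) ∧
      (∀ i, τ ≤ (N i : ℝ) + nn i) ∧ ∑ i, nn i ≤ (Q : ℝ)} τstar)
    (C : Fin m → ℕ) (hC : ∑ i, C i ≤ Q) :
    ∑ i, ∑ n ∈ Finset.Icc 1 (C i), (1 : ℝ) / Real.sqrt ((N i : ℝ) + (n : ℝ)) ≤
      8 * (Q : ℝ) / Real.sqrt τstar :=
  ip_value_le_eight_budget_div_sqrt_lp_general m N Q τstar hτpos hopt C hC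
end
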